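/- Let n ≥ 2 and 0 ≤ h ≤ n. Then HCN_n has an h-edge-cut of size 2^h·(n+1−h): there exists a set F of edges with |F| = 2^h·(n+1−h) such that HCN_n − F is disconnected and every vertex has at least h incident edges remaining. Hence λ^h(HCN_n) ≤ 2^h·(n+1−h). -/

import Mathlib

/-- The hypercube graph on `Fin n → Bool`: adjacency = Hamming distance 1. -/
def Qn (n : ℕ) : SimpleGraph (Fin n → Bool) where
  Adj x y := (Finset.univ.filter fun i => x i ≠ y i).card = 1
  symm := by
    constructor
    intro x y h
    convert h using 2
    ext i
    simp [ne_comm]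
  loopless := by
    constructor
    intro x h
    simp at h

/-- Bitwise complement. -/
def bcomp (n : ℕ) (x : Fin n → Bool) : Fin n → Bool := fun i => !(x i)

/-- Crossing-edge adjacency in HCN_n. -/
def CAdj (n : ℕ) (u v : (Fin n → Bool) × (Fin n → Bool)) : Prop :=
  (u.1 ≠ u.2 ∧ v = (u.2, u.1)) ∨
  (u.1 = u.2 ∧ v = (bcomp n u.1, bcomp n u.1)) ∨
  (v.1 ≠ v.2 ∧ u = (v.2, v.1)) ∨
  (v.1 = v.2 ∧ u = (bcomp n v.1, bcomp n v.1))

/-- The hierarchical cubic network HCN_n. -/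
def HCN (n : ℕ) : SimpleGraph ((Fin n → Bool) × (Fin n → Bool)) where
  Adj u v := u ≠ v ∧ ((u.1 = v.1 ∧ (Qn n).Adj u.2 v.2) ∨ CAdj n u v)
  symm := by
    constructor
    rintro u v ⟨hne, h⟩
    refine ⟨hne.symm, ?_⟩
    rcases h with ⟨h1, h2⟩ | h | h | h | h
    · exact Or.inl ⟨h1.symm, (Qn n).adj_symm h2⟩
    · exact Or.inr (Or.inr (Or.inr (Or.inl h)))
    · exact Or.inr (Or.inr (Or.inr (Or.inr h)))
    · exact Or.inr (Or.inl h)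
    · exact Or.inr (Or.inr (Or.inl h))
  loopless := by constructor; intro u h; exact h.1 rfl

/-! Let `S ⊆ Qₙ` be the `h`-dimensional subcube of words vanishing outside the first `h`
coordinates, and cut along the edge boundary of `A = {0ⁿ} × S`. Each of the `2ʰ` vertices of `A`
has exactly `n - h` cube neighbours and one crossing neighbour outside `A`, so the boundary has
`2ʰ (n + 1 - h)` edges, and deleting it separates `A` from the rest. Flipping one of the first
`h` coordinates changes neither the cluster nor membership in `S`, so these `h` edges at every
vertex survive the cut. -/

open Finset

namespace SimpleGraph

variable {V : Type*} [Fintype V] [DecidableEq V]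

def edgeBoundary (G : SimpleGraph V) [DecidableRel G.Adj] (A : Finset V) : Finset (Sym2 V) :=
  {p ∈ A ×ˢ Aᶜ | G.Adj p.1 p.2}.image fun p => s(p.1, p.2)

variable {G : SimpleGraph V} [DecidableRel G.Adj] {A : Finset V}

lemma mem_edgeBoundary {e : Sym2 V} :
    e ∈ G.edgeBoundary A ↔ ∃ a ∈ A, ∃ b ∉ A, G.Adj a b ∧ s(a, b) = e := by
  simp [edgeBoundary, and_assoc]

lemma coe_edgeBoundary_subset_edgeSet : (G.edgeBoundary A : Set (Sym2 V)) ⊆ G.edgeSet := by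
  intro e he
  obtain ⟨a, -, b, -, hab, rfl⟩ := mem_edgeBoundary.1 he
  exact hab

lemma mk_notMem_edgeBoundary {a b : V} (h : a ∈ A ↔ b ∈ A) : s(a, b) ∉ G.edgeBoundary A := by
  rw [mem_edgeBoundary]
  rintro ⟨a', ha', b', hb', -, he⟩
  rcases Sym2.eq_iff.1 he with ⟨rfl, rfl⟩ | ⟨rfl, rfl⟩ <;> tauto

lemma card_edgeBoundary : #(G.edgeBoundary A) = ∑ a ∈ A, #{b ∈ Aᶜ | G.Adj a b} := by
  rw [edgeBoundary, card_image_of_injOn, card_filter, sum_product]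
  · simp only [card_filter]
  rintro ⟨a, b⟩ hab ⟨a', b'⟩ hab' he
  simp only [coe_filter, mem_product, mem_compl, Set.mem_ofPred_eq] at hab hab'
  rcases Sym2.mk_eq_mk_iff.1 he with he | he
  · exact he
  · obtain ⟨rfl, -⟩ := Prod.ext_iff.1 he
    exact absurd hab.1.1 hab'.1.2

lemma not_connected_deleteEdges_edgeBoundary {a b : V} (ha : a ∈ A) (hb : b ∉ A) :
    ¬ (G.deleteEdges (G.edgeBoundary A)).Connected := by
  intro hconn
  obtain ⟨p⟩ := hconn.preconnected a b
  obtain ⟨d, -, hd₁, hd₂⟩ := p.exists_boundary_dart (A : Set V) ha hb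
  have hd := d.adj
  rw [deleteEdges_adj] at hd
  exact hd.2 (mem_edgeBoundary.2 ⟨_, hd₁, _, hd₂, hd.1, rfl⟩)

end SimpleGraph

namespace Qn

variable {n : ℕ}

def flipAt (i : Fin n) (y : Fin n → Bool) : Fin n → Bool := Function.update y i (!y i)

@[simp] lemma flipAt_apply_self (i : Fin n) (y : Fin n → Bool) : flipAt i y i = !y i :=
  Function.update_self ..

lemma flipAt_apply_of_ne {i j : Fin n} (h : j ≠ i) (y : Fin n → Bool) : flipAt i y j = y j :=
  Function.update_of_ne h ..

lemma flipAt_ne_self (i : Fin n) (y : Fin n → Bool) : flipAt i y ≠ y := fun h => by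
  simpa using congrFun h i

lemma flipAt_left_injective (y : Fin n → Bool) : Function.Injective fun i => flipAt i y := by
  intro i j h
  by_contra hij
  simpa [flipAt_apply_of_ne hij] using congrFun h i

lemma adj_iff {y z : Fin n → Bool} : (Qn n).Adj y z ↔ ∃ i, z = flipAt i y := by
  change #{i | y i ≠ z i} = 1 ↔ _
  rw [card_eq_one]
  refine exists_congr fun i => ⟨fun h => funext fun j => ?_, ?_⟩
  · have hj : y j ≠ z j ↔ j = i := by simpa using Finset.ext_iff.1 h j
    rcases eq_or_ne j i with rfl | hji
    · cases hy : y j <;> cases hz : z j <;> simp_all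
    · rw [flipAt_apply_of_ne hji]
      exact not_not.1 (mt hj.1 hji) |>.symm
  · rintro rfl
    ext j
    rcases eq_or_ne j i with rfl | hji
    · simp
    · simp [flipAt_apply_of_ne hji, hji]

variable {h : ℕ} {i : Fin n} {y : Fin n → Bool}

def lowCube (n h : ℕ) : Finset (Fin n → Bool) :=
  Fintype.piFinset fun j => if h ≤ (j : ℕ) then {false} else univ

lemma mem_lowCube : y ∈ lowCube n h ↔ ∀ j : Fin n, h ≤ (j : ℕ) → y j = false := by
  simp only [lowCube, Fintype.mem_piFinset]
  refine forall_congr' fun j => ?_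
  split_ifs with hj <;> simp [hj]

lemma card_lowCube (hh : h ≤ n) : #(lowCube n h) = 2 ^ h := by
  simp only [lowCube, Fintype.card_piFinset, apply_ite Finset.card, card_singleton, card_univ,
    Fintype.card_bool, prod_ite, prod_const_one, one_mul, prod_const]
  simp [Fin.card_filter_val_lt, hh]

lemma flipAt_mem_lowCube_iff_of_lt (hi : (i : ℕ) < h) :
    flipAt i y ∈ lowCube n h ↔ y ∈ lowCube n h := by
  simp only [mem_lowCube]
  refine forall_congr' fun j => imp_congr_right fun hj => ?_
  rw [flipAt_apply_of_ne (by rintro rfl; omega)]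

lemma flipAt_notMem_lowCube (hy : y ∈ lowCube n h) (hi : h ≤ (i : ℕ)) :
    flipAt i y ∉ lowCube n h := by
  rw [mem_lowCube] at hy ⊢
  intro hflip
  simpa [hy i hi] using hflip i hi

end Qn

lemma bcomp_bcomp {n : ℕ} (x : Fin n → Bool) : bcomp n (bcomp n x) = x := by
  funext i
  simp [bcomp]

lemma bcomp_ne_self {n : ℕ} (hn : 0 < n) (x : Fin n → Bool) : bcomp n x ≠ x := fun h => by
  simpa [bcomp] using congrFun h ⟨0, hn⟩

namespace HCN

open Qn SimpleGraph

variable {n h : ℕ}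

def cross (u : (Fin n → Bool) × (Fin n → Bool)) : (Fin n → Bool) × (Fin n → Bool) :=
  if u.1 = u.2 then (bcomp n u.1, bcomp n u.1) else (u.2, u.1)

lemma fst_cross_ne (hn : 0 < n) (u : (Fin n → Bool) × (Fin n → Bool)) : (cross u).1 ≠ u.1 := by
  unfold cross
  split_ifs with hxy
  · exact bcomp_ne_self hn _
  · exact Ne.symm hxy

lemma adj_flipAt (x w : Fin n → Bool) (i : Fin n) : (HCN n).Adj (x, w) (x, flipAt i w) :=
  ⟨by simpa using (flipAt_ne_self i w).symm, Or.inl ⟨rfl, Qn.adj_iff.2 ⟨i, rfl⟩⟩⟩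

lemma adj_iff (hn : 0 < n) {u v : (Fin n → Bool) × (Fin n → Bool)} :
    (HCN n).Adj u v ↔ (∃ i, v = (u.1, flipAt i u.2)) ∨ v = cross u := by
  obtain ⟨x, y⟩ := u
  constructor
  · rintro ⟨hne, ⟨hx, hy⟩ | hc⟩
    · obtain ⟨i, hi⟩ := Qn.adj_iff.1 hy
      exact Or.inl ⟨i, Prod.ext hx.symm hi⟩
    obtain ⟨x', y'⟩ := v
    right
    unfold CAdj at hc
    unfold cross
    simp only [Prod.mk.injEq] at hc ⊢
    rcases hc with ⟨hxy, rfl, rfl⟩ | ⟨rfl, rfl, rfl⟩ | ⟨hxy, rfl, rfl⟩ | ⟨rfl, rfl, rfl⟩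
    all_goals simp_all [bcomp_bcomp, eq_comm]
  · rintro (⟨i, rfl⟩ | rfl)
    · exact adj_flipAt x y i
    · refine ⟨fun heq => fst_cross_ne hn (x, y) (congrArg Prod.fst heq).symm, Or.inr ?_⟩
      unfold CAdj cross
      by_cases hxy : x = y <;> simp [hxy]

def lowBlock (n h : ℕ) : Finset ((Fin n → Bool) × (Fin n → Bool)) :=
  {fun _ => false} ×ˢ lowCube n h

lemma cross_notMem_lowBlock (hn : 0 < n) {a : (Fin n → Bool) × (Fin n → Bool)}
    (ha : a ∈ lowBlock n h) : cross a ∉ lowBlock n h := by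
  simp only [lowBlock, mem_product, mem_singleton] at ha ⊢
  exact fun hc => fst_cross_ne hn a (hc.1.trans ha.1.symm)

open scoped Classical in
lemma filter_adj_notMem_lowBlock (hn : 0 < n) {y : Fin n → Bool} (hy : y ∈ lowCube n h) :
    (lowBlock n h)ᶜ.filter (fun b => (HCN n).Adj (fun _ => false, y) b) =
      insert (cross (fun _ => false, y))
        ((univ.filter fun i : Fin n => h ≤ (i : ℕ)).image fun i => (fun _ => false, flipAt i y)) := by
  have hmem : (fun _ => false, y) ∈ lowBlock n h := by simp [lowBlock, hy]
  ext b
  simp only [mem_filter, mem_compl, mem_insert, mem_image, mem_univ, true_and]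
  rw [adj_iff hn]
  constructor
  · rintro ⟨hb, ⟨i, rfl⟩ | rfl⟩
    · refine Or.inr ⟨i, not_lt.1 fun hi => hb ?_, rfl⟩
      simpa [lowBlock, flipAt_mem_lowCube_iff_of_lt hi] using hy
    · exact Or.inl rfl
  · rintro (rfl | ⟨i, hi, rfl⟩)
    · exact ⟨cross_notMem_lowBlock hn hmem, Or.inr rfl⟩
    · exact ⟨by simp [lowBlock, flipAt_notMem_lowCube hy hi], Or.inl ⟨i, rfl⟩⟩

open scoped Classical in
lemma card_filter_adj_notMem_lowBlock (hn : 0 < n) (hh : h ≤ n)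
    {a : (Fin n → Bool) × (Fin n → Bool)} (ha : a ∈ lowBlock n h) :
    #{b ∈ (lowBlock n h)ᶜ | (HCN n).Adj a b} = n + 1 - h := by
  obtain ⟨x, y⟩ := a
  have hmem := ha
  simp only [lowBlock, mem_product, mem_singleton] at hmem
  obtain ⟨rfl, hy⟩ := hmem
  have hhigh : #{i : Fin n | h ≤ (i : ℕ)} = n - h := by
    have := card_filter_add_card_filter_not (s := univ) fun i : Fin n => (i : ℕ) < h
    simp only [Fin.card_filter_val_lt, not_lt, card_univ, Fintype.card_fin] at this
    omega
  rw [filter_adj_notMem_lowBlock hn hy, card_insert_of_notMem, card_image_of_injective _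
    fun i j hij => flipAt_left_injective y (congrArg Prod.snd hij), hhigh]
  · omega
  · simp only [mem_image, not_exists, not_and]
    exact fun i _ hi => fst_cross_ne hn _ (congrArg Prod.fst hi).symm

open scoped Classical in
lemma card_edgeBoundary_lowBlock (hn : 0 < n) (hh : h ≤ n) :
    #((HCN n).edgeBoundary (lowBlock n h)) = 2 ^ h * (n + 1 - h) := by
  rw [card_edgeBoundary, sum_congr rfl fun a ha => card_filter_adj_notMem_lowBlock hn hh ha,
    sum_const, lowBlock, card_product, card_singleton, one_mul, card_lowCube hh, smul_eq_mul]

open scoped Classical in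
lemma le_card_adj_deleteEdges_edgeBoundary_lowBlock (hh : h ≤ n)
    (v : (Fin n → Bool) × (Fin n → Bool)) :
    h ≤ #{w | ((HCN n).deleteEdges ↑((HCN n).edgeBoundary (lowBlock n h))).Adj v w} := by
  obtain ⟨x, y⟩ := v
  calc h = #{i : Fin n | (i : ℕ) < h} := by simp [Fin.card_filter_val_lt, hh]
    _ ≤ _ := card_le_card_of_injOn (fun i => (x, flipAt i y)) ?_
      fun i _ j _ hij => flipAt_left_injective y (congrArg Prod.snd hij)
  intro i hi
  simp only [coe_filter, mem_univ, true_and, Set.mem_ofPred_eq] at hi ⊢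
  rw [deleteEdges_adj]
  refine ⟨adj_flipAt x y i, mk_notMem_edgeBoundary ?_⟩
  simp [lowBlock, flipAt_mem_lowCube_iff_of_lt hi]

end HCN

open scoped Classical in
/-- HCN_n (n ≥ 2, 0 ≤ h ≤ n) has an h-edge-cut of size 2^h (n+1-h): removing it
disconnects the graph while every vertex keeps at least h incident edges.
Hence λ^h(HCN_n) ≤ 2^h (n+1-h). -/
theorem stmt16 (n h : ℕ) (hn : 2 ≤ n) (hh : h ≤ n) :
    ∃ F : Finset (Sym2 ((Fin n → Bool) × (Fin n → Bool))),
      ↑F ⊆ (HCN n).edgeSet ∧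
      F.card = 2 ^ h * (n + 1 - h) ∧
      ¬ ((HCN n).deleteEdges ↑F).Connected ∧
      ∀ v, h ≤ (Finset.univ.filter
        (fun w => ((HCN n).deleteEdges ↑F).Adj v w)).card := by
  have hn₀ : 0 < n := by omega
  have hmem : (fun _ => false, fun _ => false) ∈ HCN.lowBlock n h := by
    simp [HCN.lowBlock, Qn.mem_lowCube]
  exact ⟨(HCN n).edgeBoundary (HCN.lowBlock n h), SimpleGraph.coe_edgeBoundary_subset_edgeSet,
    HCN.card_edgeBoundary_lowBlock hn₀ hh,
    SimpleGraph.not_connected_deleteEdges_edgeBoundary hmem (HCN.cross_notMem_lowBlock hn₀ hmem),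
    HCN.le_card_adj_deleteEdges_edgeBoundary_lowBlock hh⟩
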